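/- For every rational number q, the set {x ∈ 𝔈 : x₀ = q} is a nowhere dense C-set in Erdős space 𝔈: it is nowhere dense in 𝔈 and is an intersection of clopen subsets of 𝔈. -/

import Mathlib

open Topology Filter Set

/-- A C-set in a topological space is an intersection of clopen subsets. -/
def IsCSet {X : Type*} [TopologicalSpace X] (C : Set X) : Prop :=
  ∃ 𝒮 : Set (Set X), (∀ s ∈ 𝒮, IsClopen s) ∧ C = ⋂₀ 𝒮

/-- Erdős space: the rational points of the real Hilbert space ℓ². -/
def ErdosSpace : Set (lp (fun _ : ℕ => ℝ) 2) :=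
  {x | ∀ n : ℕ, ∃ q : ℚ, x n = (q : ℝ)}

theorem IsCSet.preimage {X Y : Type*} [TopologicalSpace X] [TopologicalSpace Y] {f : X → Y}
    (hf : Continuous f) {C : Set Y} (hC : IsCSet C) : IsCSet (f ⁻¹' C) := by
  obtain ⟨𝒮, h𝒮, rfl⟩ := hC
  refine ⟨Set.preimage f '' 𝒮, ?_, by rw [preimage_sInter, sInter_image]⟩
  rintro _ ⟨s, hs, rfl⟩
  exact (h𝒮 s hs).preimage hf

theorem isCSet_singleton {X : Type*} [TopologicalSpace X] [TotallySeparatedSpace X] (x : X) :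
    IsCSet {x} := by
  refine ⟨{U | IsClopen U ∧ x ∈ U}, fun U hU => hU.1, ?_⟩
  refine Subset.antisymm (fun y hy U hU => hy ▸ hU.2) fun y hy => by_contra fun hyx => ?_
  obtain ⟨U, hU, hxU, hyU⟩ := exists_isClopen_of_totally_separated (Ne.symm hyx)
  exact hyU (hy U ⟨hU, hxU⟩)

/-- A continuous real function with rational values factors continuously through `ℚ`, which is
totally separated, so its fibres are C-sets. -/
theorem isCSet_preimage_of_forall_eq_ratCast {X : Type*} [TopologicalSpace X] {f : X → ℝ}
    (hf : Continuous f) (hrat : ∀ x, ∃ a : ℚ, f x = a) (q : ℚ) :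
    IsCSet (f ⁻¹' {(q : ℝ)}) := by
  choose g hg using hrat
  have hfg : f = (↑) ∘ g := funext hg
  have hg_cont : Continuous g := Rat.isEmbedding_coe_real.continuous_iff.2 (hfg ▸ hf)
  have hfiber : f ⁻¹' {(q : ℝ)} = g ⁻¹' {q} := by
    ext x
    simp [hg]
  exact hfiber ▸ (isCSet_singleton q).preimage hg_cont

namespace ErdosSpace

theorem add_single_mem {x : lp (fun _ : ℕ => ℝ) 2} (hx : x ∈ ErdosSpace) (n : ℕ) (a : ℚ) :
    x + lp.single 2 n (a : ℝ) ∈ ErdosSpace := by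
  intro m
  obtain ⟨b, hb⟩ := hx m
  rcases eq_or_ne m n with rfl | hmn
  · exact ⟨b + a, by simp [hb]⟩
  · exact ⟨b, by simp [hmn, hb]⟩

theorem continuous_eval (n : ℕ) :
    Continuous fun x : ↥ErdosSpace => (x : lp (fun _ : ℕ => ℝ) 2) n :=
  (lp.lipschitzWith_one_eval 2 n).continuous.comp continuous_subtype_val

/-- Adding a small positive rational to the `n`-th coordinate stays in Erdős space but leaves
the fibre. -/
theorem interior_setOf_eval_eq (n : ℕ) (c : ℝ) :
    interior {x : ↥ErdosSpace | (x : lp (fun _ : ℕ => ℝ) 2) n = c} = ∅ := by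
  refine eq_empty_iff_forall_notMem.2 fun x hx => ?_
  obtain ⟨ε, hε, hball⟩ := Metric.mem_nhds_iff.1 (mem_interior_iff_mem_nhds.1 hx)
  obtain ⟨δ, hδ, hδε⟩ := exists_rat_btwn hε
  let y : ↥ErdosSpace := ⟨_, add_single_mem x.2 n δ⟩
  have hyx : dist y x < ε := by
    rw [Subtype.dist_eq, dist_eq_norm, add_sub_cancel_left, lp.norm_single (by norm_num),
      Real.norm_eq_abs, abs_of_pos (by exact_mod_cast hδ)]
    exact hδε
  have hy : (x : lp (fun _ : ℕ => ℝ) 2) n + δ = c := by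
    simpa [y, lp.single_apply_self] using hball (Metric.mem_ball.2 hyx)
  have hx' : x ∈ {z : ↥ErdosSpace | (z : lp (fun _ : ℕ => ℝ) 2) n = c} := interior_subset hx
  have : (δ : ℝ) = 0 := by linarith [show (x : lp (fun _ : ℕ => ℝ) 2) n = c from hx']
  exact hδ.ne' (by exact_mod_cast this)

end ErdosSpace

/-- For every rational `q`, `{x ∈ 𝔈 : x₀ = q}` is a nowhere dense C-set in `𝔈`. -/
theorem stmt11 (q : ℚ) :
    IsNowhereDense {x : ↥ErdosSpace | (x : lp (fun _ : ℕ => ℝ) 2) 0 = (q : ℝ)} ∧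
    IsCSet {x : ↥ErdosSpace | (x : lp (fun _ : ℕ => ℝ) 2) 0 = (q : ℝ)} := by
  have hclosed : IsClosed {x : ↥ErdosSpace | (x : lp (fun _ : ℕ => ℝ) 2) 0 = (q : ℝ)} :=
    isClosed_singleton.preimage (ErdosSpace.continuous_eval 0)
  exact ⟨hclosed.isNowhereDense_iff.2 (ErdosSpace.interior_setOf_eval_eq 0 q),
    isCSet_preimage_of_forall_eq_ratCast (ErdosSpace.continuous_eval 0) (fun x => x.2 0) q⟩
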